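/- For a simplicial group G, the maps (S_G)_n : W̄_n G → Diag_n NG defined by descending recursion y_i = (∏_{j=i+1}^{n−1} y_j^{−1} d_j ⋯ d_{i+1} s_i ⋯ s_{j−1}) (∏_{j=n−1}^{i} g_j d_j ⋯ d_{i+1} s_i ⋯ s_{n−1}) commute with all degeneracy maps: for all k ∈ [0,n] and x ∈ W̄_n G, (x s_k)(S_G)_{n+1} = (x (S_G)_n) s_k. -/

import Mathlib

namespace Paper

/-- clamped coface map `δ^k : [a] → [b]`. -/
def δOH (k a b : ℕ) : Fin (a+1) →o Fin (b+1) where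
  toFun i := ⟨min (if (i:ℕ) < k then (i:ℕ) else (i:ℕ)+1) b, Nat.lt_succ_of_le (Nat.min_le_right _ _)⟩
  monotone' := by
    intro i j hij
    have h : (i:ℕ) ≤ (j:ℕ) := hij
    simp only [Fin.mk_le_mk]
    split_ifs <;> omega

/-- clamped codegeneracy map `σ^k : [a] → [b]`. -/
def σOH (k a b : ℕ) : Fin (a+1) →o Fin (b+1) where
  toFun i := ⟨min (if (i:ℕ) ≤ k then (i:ℕ) else (i:ℕ)-1) b, Nat.lt_succ_of_le (Nat.min_le_right _ _)⟩
  monotone' := by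
    intro i j hij
    have h : (i:ℕ) ≤ (j:ℕ) := hij
    simp only [Fin.mk_le_mk]
    split_ifs <;> omega

/-- `τ^k : [n] → [1]`, sending `[0, n-k]` to `0` and the rest to `1`. -/
def τOH (n k : ℕ) : Fin (n+1) →o Fin 2 where
  toFun i := if (i:ℕ) + k ≤ n then 0 else 1
  monotone' := by
    intro i j hij
    have h : (i:ℕ) ≤ (j:ℕ) := hij
    dsimp only
    split_ifs with h1 h2 h3
    · exact le_refl _
    · exact Fin.zero_le _
    · exact absurd h3 (by omega)
    · exact le_refl _

/-- application of `θ : [m] → [n]` to a natural number (clamped). -/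
def fApp {m n : ℕ} (θ : Fin (m+1) →o Fin (n+1)) (x : ℕ) : ℕ :=
  (θ ⟨min x m, Nat.lt_succ_of_le (Nat.min_le_right _ _)⟩ : Fin (n+1))

theorem fApp_mono {m n : ℕ} (θ : Fin (m+1) →o Fin (n+1)) {x y : ℕ} (h : x ≤ y) :
    fApp θ x ≤ fApp θ y :=
  Fin.le_def.mp (θ.monotone (Fin.mk_le_mk.mpr (by omega)))

theorem fApp_le {m n : ℕ} (θ : Fin (m+1) →o Fin (n+1)) (x : ℕ) : fApp θ x ≤ n :=
  Nat.lt_succ_iff.mp (Fin.isLt _)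

theorem fApp_coe {m n : ℕ} (θ : Fin (m+1) →o Fin (n+1)) (p : Fin (m+1)) :
    fApp θ (p:ℕ) = (θ p : ℕ) := by
  have hp : (⟨min (p:ℕ) m, Nat.lt_succ_of_le (Nat.min_le_right _ _)⟩ : Fin (m+1)) = p :=
    Fin.ext (show min (p:ℕ) m = (p:ℕ) from by have := p.isLt; omega)
  unfold fApp
  rw [hp]

/-- `Spl_{≤ p}(θ) : [p] → [pθ]`. -/
def splLe {m n : ℕ} (θ : Fin (m+1) →o Fin (n+1)) (p : Fin (m+1)) :
    Fin ((p:ℕ)+1) →o Fin ((θ p : ℕ)+1) where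
  toFun i := ⟨fApp θ (i:ℕ), by
    have h1 : fApp θ (i:ℕ) ≤ fApp θ (p:ℕ) := fApp_mono θ (by have := i.isLt; omega)
    have h2 : fApp θ (p:ℕ) = (θ p : ℕ) := fApp_coe θ p
    omega⟩
  monotone' := by
    intro a b hab
    have h : (a:ℕ) ≤ (b:ℕ) := hab
    simp only [Fin.mk_le_mk]
    exact fApp_mono θ h

/-- `Spl_{≥ p}(θ) : [m-p] → [n-pθ]`. -/
def splGe {m n : ℕ} (θ : Fin (m+1) →o Fin (n+1)) (p : Fin (m+1)) :
    Fin (m - (p:ℕ) + 1) →o Fin (n - (θ p : ℕ) + 1) where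
  toFun i := ⟨fApp θ ((i:ℕ) + (p:ℕ)) - (θ p : ℕ), by
    have h1 : fApp θ ((i:ℕ) + (p:ℕ)) ≤ n := fApp_le θ _
    omega⟩
  monotone' := by
    intro a b hab
    have h : (a:ℕ) ≤ (b:ℕ) := hab
    simp only [Fin.mk_le_mk]
    have := fApp_mono θ (show (a:ℕ) + (p:ℕ) ≤ (b:ℕ) + (p:ℕ) by omega)
    omega

/-- the restriction `θ|_[i]^[j] : [i] → [j]` of `θ` (clamped). -/
def restrictOH {m n : ℕ} (θ : Fin (m+1) →o Fin (n+1)) (i j : ℕ) : Fin (i+1) →o Fin (j+1) where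
  toFun k := ⟨min (fApp θ (k:ℕ)) j, Nat.lt_succ_of_le (Nat.min_le_right _ _)⟩
  monotone' := by
    intro a b hab
    have h : (a:ℕ) ≤ (b:ℕ) := hab
    simp only [Fin.mk_le_mk]
    have := fApp_mono θ h
    omega

/-- ascending product `f a * f (a+1) * ⋯ * f (b-1)`. -/
def aProd {γ : Type*} [Monoid γ] (f : ℕ → γ) (a : ℕ) : ℕ → γ
  | 0 => 1
  | b+1 => if a ≤ b then aProd f a b * f b else 1

/-- descending product `f (b-1) * f (b-2) * ⋯ * f a`. -/
def dProd {γ : Type*} [Monoid γ] (f : ℕ → γ) (a : ℕ) : ℕ → γ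
  | 0 => 1
  | b+1 => if a ≤ b then f b * dProd f a b else 1

end Paper
namespace Paper

/-- A simplicial group, given by levels, structure maps, functoriality,
and levelwise multiplicativity. -/
structure SGrp where
  obj : ℕ → Type
  grp : ∀ n, Group (obj n)
  map : ∀ {m n : ℕ}, (Fin (m+1) →o Fin (n+1)) → obj n → obj m
  map_id : ∀ {n : ℕ} (x : obj n), map OrderHom.id x = x
  map_comp : ∀ {l m n : ℕ} (α : Fin (l+1) →o Fin (m+1)) (β : Fin (m+1) →o Fin (n+1)) (x : obj n),
    map α (map β x) = map (β.comp α) x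
  map_mul : ∀ {m n : ℕ} (θ : Fin (m+1) →o Fin (n+1)) (x y : obj n),
    map θ (x * y) = map θ x * map θ y

attribute [instance] SGrp.grp

namespace SGrp

/-- face `d_k : G_N → G_{N-1}` -/
def face (G : SGrp) (k : ℕ) {N : ℕ} : G.obj N → G.obj (N-1) := G.map (δOH k (N-1) N)

/-- degeneracy `s_k : G_M → G_{M+1}` -/
def deg (G : SGrp) (k : ℕ) {M : ℕ} : G.obj M → G.obj (M+1) := G.map (σOH k (M+1) M)

/-- transport between levels (junk value `1` when levels differ). -/
def gcast (G : SGrp) {a : ℕ} (b : ℕ) (x : G.obj a) : G.obj b := if h : a = b then h ▸ x else 1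

/-- descending composite of faces `d_{i+c} d_{i+c-1} ⋯ d_{i+1}`. -/
def dcomp (G : SGrp) : (i c : ℕ) → {N : ℕ} → G.obj N → G.obj (N - c)
  | _, 0, _, x => x
  | i, c+1, _, x => G.face (i+1) (G.dcomp (i+1) c x)

/-- ascending composite of degeneracies `s_i s_{i+1} ⋯ s_{i+c-1}`. -/
def scomp (G : SGrp) : (i c : ℕ) → {M : ℕ} → G.obj M → G.obj (M + c)
  | _, 0, _, x => x
  | i, c+1, _, x => G.deg (i+c) (G.scomp i c x)

/-- `x ↦ x d_j ⋯ d_{i+1} s_i ⋯ s_{j-1}`, an endomap of `G_N`. -/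
def ds (G : SGrp) (i j : ℕ) {N : ℕ} (x : G.obj N) : G.obj N :=
  G.gcast N (G.scomp i (min (j - i) N) (G.dcomp i (min (j - i) N) x))

/-- `x ↦ x d_j ⋯ d_{i+1} s_i ⋯ s_{n-1} : G_j → G_n`. -/
def dsTo (G : SGrp) (i n : ℕ) {j : ℕ} (x : G.obj j) : G.obj n :=
  G.gcast n (G.scomp i (n - i) (G.gcast i (G.dcomp i (j - i) x)))

/-- the `y_i` of the section `S_G`, defined by descending recursion (with fuel). -/
def yAux (G : SGrp) (n : ℕ) (g : ∀ j : ℕ, G.obj j) : ℕ → ℕ → G.obj n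
  | 0, _ => 1
  | fuel+1, i =>
      aProd (fun j => G.ds i j (G.yAux n g fuel j)⁻¹) (i+1) n *
      dProd (fun j => G.dsTo i n (g j)) i n

/-- `W̄_n G = ∏_{j = n-1}^{0} G_j`. -/
def WbarN (G : SGrp) (n : ℕ) : Type := ∀ j : Fin n, G.obj (j:ℕ)

/-- extension of a tuple in `W̄_n G` by `1`. -/
def gE (G : SGrp) {n : ℕ} (g : G.WbarN n) : ∀ j : ℕ, G.obj j :=
  fun j => if h : j < n then g ⟨j, h⟩ else 1

/-- the coretraction `(S_G)_n : W̄_n G → Diag_n NG = (G_n)^n`. -/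
def SGn (G : SGrp) (n : ℕ) (g : G.WbarN n) : Fin n → G.obj n :=
  fun i => G.yAux n (G.gE g) n (i:ℕ)

/-- extension of a tuple in `(G_n)^n` by `1`. -/
def xE (G : SGrp) {n : ℕ} (x : Fin n → G.obj n) : ℕ → G.obj n :=
  fun j => if h : j < n then x ⟨j, h⟩ else 1

/-- the structure map `W̄_θ : W̄_n G → W̄_m G` of the Kan classifying simplicial set. -/
def wbarMap (G : SGrp) {m n : ℕ} (θ : Fin (m+1) →o Fin (n+1)) (g : G.WbarN n) : G.WbarN m :=
  fun i => dProd (fun j => G.map (restrictOH θ (i:ℕ) j) (G.gE g j))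
    ((θ i.castSucc : Fin (n+1)) : ℕ) ((θ i.succ : Fin (n+1)) : ℕ)

/-- the structure map `(Diag NG)_θ : (G_n)^n → (G_m)^m` of the diagonal of the nerve. -/
def diagMap (G : SGrp) {m n : ℕ} (θ : Fin (m+1) →o Fin (n+1)) (x : Fin n → G.obj n) :
    Fin m → G.obj m :=
  fun i => dProd (fun j => G.map θ (G.xE x j))
    ((θ i.castSucc : Fin (n+1)) : ℕ) ((θ i.succ : Fin (n+1)) : ℕ)

/-- the retraction `(D_G)_n : Diag_n NG → W̄_n G`, `(g_i)_i ↦ (g_i d_n ⋯ d_{i+1})_i`. -/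
def DGn (G : SGrp) (n : ℕ) (x : Fin n → G.obj n) : G.WbarN n :=
  fun i => G.gcast (i:ℕ) (G.dcomp (i:ℕ) (n - (i:ℕ)) (x i))

/-- the components `y_i^{(n+1-k)}` of the homotopy `H`, by descending recursion (with fuel). -/
def hAux (G : SGrp) (n k : ℕ) (g : ℕ → G.obj n) : ℕ → ℕ → G.obj n
  | 0, _ => 1
  | fuel+1, i =>
      if k ≤ i + 1 then g i
      else
        aProd (fun j => G.ds i j (G.hAux n k g fuel j)⁻¹) (i+1) (k-1) *
        dProd (fun j => G.ds i (k-1) (g j)) i (k-1)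

end SGrp

/-- recover `k` from the simplex `τ^{n+1-k} ∈ Δ^1_n`: the number of vertices sent to `0`. -/
def kOf {n : ℕ} (t : Fin (n+1) →o Fin 2) : ℕ :=
  (Finset.univ.filter (fun i => t i = 0)).card

namespace SGrp

/-- the homotopy `H_n : Diag_n NG × Δ^1_n → Diag_n NG`. -/
def Hn (G : SGrp) (n : ℕ) (x : Fin n → G.obj n) (t : Fin (n+1) →o Fin 2) : Fin n → G.obj n :=
  fun i => G.hAux n (kOf t) (G.xE x) (n+1) (i:ℕ)

end SGrp

/-- morphisms of simplicial groups. -/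
structure SGrpHom (G G' : SGrp) where
  app : ∀ n, G.obj n → G'.obj n
  comm : ∀ {m n : ℕ} (θ : Fin (m+1) →o Fin (n+1)) (x : G.obj n),
    app m (G.map θ x) = G'.map θ (app n x)
  mul : ∀ (n : ℕ) (x y : G.obj n), app n (x * y) = app n x * app n y

end Paper

/-!
Write `g' = x s_k`: its entries are those of `x`, with `1` inserted in position `k` and `s_k`
applied to the entries above it. All operators `d_j ⋯ d_{i+1} s_i ⋯ s_{j-1}` occurring in the
recursion for `y_i` are induced by maps of ordinals (collapsing `(i, j]` onto `i`, or truncating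
at `i`), so they commute with `s_k` up to the shift of indices `j ↦ j - 1` above `k`; each such
commutation is an identity between monotone maps of `ℕ`. Descending induction on `i` then gives
`y'_i = y_i s_k` for `i < k` and `y'_{i+1} = y_i s_k` for `i ≥ k`, while
`y'_k = (y_k⁻¹ y_k) s_k = 1` since the `j = k` factor of the first product for `y_k` is `y_k⁻¹`
itself. This is exactly `(y_i)_i s_k` in `Diag NG`.
-/

namespace Paper

section Products

variable {γ δ : Type*} [Monoid γ] [Monoid δ]

theorem aProd_of_le (f : ℕ → γ) {a b : ℕ} (h : b ≤ a) : aProd f a b = 1 := by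
  cases b with
  | zero => rfl
  | succ b => exact if_neg (by omega)

theorem dProd_of_le (f : ℕ → γ) {a b : ℕ} (h : b ≤ a) : dProd f a b = 1 := by
  cases b with
  | zero => rfl
  | succ b => exact if_neg (by omega)

theorem aProd_succ (f : ℕ → γ) {a b : ℕ} (h : a ≤ b) : aProd f a (b+1) = aProd f a b * f b :=
  if_pos h

theorem dProd_succ (f : ℕ → γ) {a b : ℕ} (h : a ≤ b) : dProd f a (b+1) = f b * dProd f a b :=
  if_pos h

theorem dProd_single (f : ℕ → γ) (a : ℕ) : dProd f a (a+1) = f a := by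
  rw [dProd_succ f le_rfl, dProd_of_le f le_rfl, mul_one]

theorem aProd_eq_mul_aProd_succ (f : ℕ → γ) {a b : ℕ} (h : a < b) :
    aProd f a b = f a * aProd f (a+1) b := by
  induction b, h using Nat.le_induction with
  | base => rw [aProd_succ f le_rfl, aProd_of_le f le_rfl, aProd_of_le f le_rfl, one_mul, mul_one]
  | succ b hab ih => rw [aProd_succ f (by omega), aProd_succ f hab, ih, mul_assoc]

variable (φ : γ →* δ) {f : ℕ → γ} {f' : ℕ → δ} {a b : ℕ}

theorem aProd_eq_map (h : ∀ j, a ≤ j → j < b → f' j = φ (f j)) :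
    aProd f' a b = φ (aProd f a b) := by
  induction b with
  | zero => exact φ.map_one.symm
  | succ b ih =>
    by_cases hab : a ≤ b
    · rw [aProd_succ f' hab, aProd_succ f hab, map_mul, h b hab (by omega),
        ih fun j h1 h2 => h j h1 (by omega)]
    · rw [aProd_of_le f' (by omega), aProd_of_le f (by omega), map_one]

theorem dProd_eq_map (h : ∀ j, a ≤ j → j < b → f' j = φ (f j)) :
    dProd f' a b = φ (dProd f a b) := by
  induction b with
  | zero => exact φ.map_one.symm
  | succ b ih =>
    by_cases hab : a ≤ b
    · rw [dProd_succ f' hab, dProd_succ f hab, map_mul, h b hab (by omega),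
        ih fun j h1 h2 => h j h1 (by omega)]
    · rw [dProd_of_le f' (by omega), dProd_of_le f (by omega), map_one]

theorem aProd_succ_succ_eq_map (h : ∀ j, a ≤ j → j < b → f' (j+1) = φ (f j)) :
    aProd f' (a+1) (b+1) = φ (aProd f a b) := by
  induction b with
  | zero => rw [aProd_of_le f' (by omega)]; exact φ.map_one.symm
  | succ b ih =>
    by_cases hab : a ≤ b
    · rw [aProd_succ f' (by omega), aProd_succ f hab, map_mul, h b hab (by omega),
        ih fun j h1 h2 => h j h1 (by omega)]
    · rw [aProd_of_le f' (by omega), aProd_of_le f (by omega), map_one]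

theorem dProd_succ_succ_eq_map (h : ∀ j, a ≤ j → j < b → f' (j+1) = φ (f j)) :
    dProd f' (a+1) (b+1) = φ (dProd f a b) := by
  induction b with
  | zero => rw [dProd_of_le f' (by omega)]; exact φ.map_one.symm
  | succ b ih =>
    by_cases hab : a ≤ b
    · rw [dProd_succ f' (by omega), dProd_succ f hab, map_mul, h b hab (by omega),
        ih fun j h1 h2 => h j h1 (by omega)]
    · rw [dProd_of_le f' (by omega), dProd_of_le f (by omega), map_one]

theorem aProd_insert_one_eq_map {k : ℕ} (hak : a ≤ k) (hkb : k ≤ b)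
    (hlt : ∀ j, a ≤ j → j < k → f' j = φ (f j)) (hk : f' k = 1)
    (hgt : ∀ j, k ≤ j → j < b → f' (j+1) = φ (f j)) :
    aProd f' a (b+1) = φ (aProd f a b) := by
  induction b, hkb using Nat.le_induction with
  | base => rw [aProd_succ f' hak, hk, mul_one, aProd_eq_map φ hlt]
  | succ b hkb ih =>
    rw [aProd_succ f' (by omega), aProd_succ f (by omega), map_mul, hgt b hkb (by omega),
      ih fun j h1 h2 => hgt j h1 (by omega)]

theorem dProd_insert_one_eq_map {k : ℕ} (hak : a ≤ k) (hkb : k ≤ b)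
    (hlt : ∀ j, a ≤ j → j < k → f' j = φ (f j)) (hk : f' k = 1)
    (hgt : ∀ j, k ≤ j → j < b → f' (j+1) = φ (f j)) :
    dProd f' a (b+1) = φ (dProd f a b) := by
  induction b, hkb using Nat.le_induction with
  | base => rw [dProd_succ f' hak, hk, one_mul, dProd_eq_map φ hlt]
  | succ b hkb ih =>
    rw [dProd_succ f' (by omega), dProd_succ f (by omega), map_mul, hgt b hkb (by omega),
      ih fun j h1 h2 => hgt j h1 (by omega)]

end Products

/-! The maps of ordinals inducing `dcomp`, `scomp`, `ds` and `dsTo`. -/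

def dcompOH (i c N : ℕ) : Fin (N-c+1) →o Fin (N+1) where
  toFun t := ⟨min (if (t:ℕ) ≤ i then (t:ℕ) else (t:ℕ) + c) N,
    Nat.lt_succ_of_le (Nat.min_le_right _ _)⟩
  monotone' a b (h : (a:ℕ) ≤ b) := by
    simp only [Fin.mk_le_mk]
    split_ifs <;> omega

def scompOH (i c M : ℕ) : Fin (M+c+1) →o Fin (M+1) where
  toFun t := ⟨min ((t:ℕ) - min ((t:ℕ) - i) c) M, Nat.lt_succ_of_le (Nat.min_le_right _ _)⟩
  monotone' a b (h : (a:ℕ) ≤ b) := by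
    simp only [Fin.mk_le_mk]
    omega

def collapseOH (i j N : ℕ) : Fin (N+1) →o Fin (N+1) where
  toFun t := ⟨if i < (t:ℕ) ∧ (t:ℕ) ≤ j then i else t, by have := t.isLt; split_ifs <;> omega⟩
  monotone' a b (h : (a:ℕ) ≤ b) := by
    simp only [Fin.mk_le_mk]
    split_ifs <;> omega

def truncOH (i n j : ℕ) : Fin (n+1) →o Fin (j+1) where
  toFun t := ⟨min (t:ℕ) (min i j), Nat.lt_succ_of_le (by omega)⟩
  monotone' a b (h : (a:ℕ) ≤ b) := by
    simp only [Fin.mk_le_mk]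
    omega

theorem δOH_val (k a b : ℕ) (t : Fin (a+1)) :
    (δOH k a b t : ℕ) = min (if (t:ℕ) < k then (t:ℕ) else (t:ℕ) + 1) b := rfl

theorem σOH_val (k a b : ℕ) (t : Fin (a+1)) :
    (σOH k a b t : ℕ) = min (if (t:ℕ) ≤ k then (t:ℕ) else (t:ℕ) - 1) b := rfl

theorem dcompOH_val (i c N : ℕ) (t : Fin (N-c+1)) :
    (dcompOH i c N t : ℕ) = min (if (t:ℕ) ≤ i then (t:ℕ) else (t:ℕ) + c) N := rfl

theorem scompOH_val (i c M : ℕ) (t : Fin (M+c+1)) :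
    (scompOH i c M t : ℕ) = min ((t:ℕ) - min ((t:ℕ) - i) c) M := rfl

theorem collapseOH_val (i j N : ℕ) (t : Fin (N+1)) :
    (collapseOH i j N t : ℕ) = if i < (t:ℕ) ∧ (t:ℕ) ≤ j then i else t := rfl

theorem truncOH_val (i n j : ℕ) (t : Fin (n+1)) :
    (truncOH i n j t : ℕ) = min (t:ℕ) (min i j) := rfl

theorem restrictOH_val {m n : ℕ} (θ : Fin (m+1) →o Fin (n+1)) (i j : ℕ) (t : Fin (i+1)) :
    (restrictOH θ i j t : ℕ) = min (fApp θ t) j := rfl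

theorem σOH_castSucc_val (k : ℕ) {n : ℕ} (i : Fin (n+1)) :
    (σOH k (n+1) n i.castSucc : ℕ) = if (i:ℕ) ≤ k then (i:ℕ) else (i:ℕ) - 1 := by
  rw [σOH_val, Fin.val_castSucc]
  split_ifs <;> omega

theorem σOH_succ_val {k n : ℕ} (hkn : k ≤ n) (i : Fin (n+1)) :
    (σOH k (n+1) n i.succ : ℕ) = if (i:ℕ) < k then (i:ℕ) + 1 else (i:ℕ) := by
  rw [σOH_val, Fin.val_succ]
  split_ifs <;> omega

namespace SGrp

variable (G : SGrp)

def mapHom {m n : ℕ} (θ : Fin (m+1) →o Fin (n+1)) : G.obj n →* G.obj m :=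
  MonoidHom.mk' (G.map θ) (G.map_mul θ)

def degHom (k M : ℕ) : G.obj M →* G.obj (M+1) := G.mapHom (σOH k (M+1) M)

theorem degHom_apply (k M : ℕ) (z : G.obj M) : G.degHom k M z = G.deg k z := rfl

theorem deg_mul (k : ℕ) {M : ℕ} (x y : G.obj M) : G.deg k (x * y) = G.deg k x * G.deg k y :=
  G.map_mul _ x y

theorem deg_one (k : ℕ) {M : ℕ} : G.deg k (1 : G.obj M) = 1 := map_one (G.degHom k M)

theorem deg_inv (k : ℕ) {M : ℕ} (z : G.obj M) : G.deg k z⁻¹ = (G.deg k z)⁻¹ :=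
  map_inv (G.degHom k M) z

theorem map_congr_val {m n : ℕ} {α β : Fin (m+1) →o Fin (n+1)} (h : ∀ t, (α t : ℕ) = β t)
    (x : G.obj n) : G.map α x = G.map β x := by
  rw [OrderHom.ext α β (funext fun t => Fin.ext (h t))]

theorem map_map_congr_val {l m m' n : ℕ} {α : Fin (l+1) →o Fin (m+1)}
    {β : Fin (m+1) →o Fin (n+1)} {α' : Fin (l+1) →o Fin (m'+1)} {β' : Fin (m'+1) →o Fin (n+1)}
    (h : ∀ t, (β (α t) : ℕ) = β' (α' t)) (x : G.obj n) :
    G.map α (G.map β x) = G.map α' (G.map β' x) := by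
  rw [G.map_comp, G.map_comp]
  exact G.map_congr_val h x

theorem gcast_self {a : ℕ} (x : G.obj a) : G.gcast a x = x := dif_pos rfl

theorem gcast_map {a a' b : ℕ} (ha : a = a') (θ : Fin (a+1) →o Fin (b+1))
    (θ' : Fin (a'+1) →o Fin (b+1)) (h : ∀ t : ℕ, fApp θ t = fApp θ' t) (x : G.obj b) :
    G.gcast a' (G.map θ x) = G.map θ' x := by
  subst ha
  rw [gcast_self]
  exact G.map_congr_val (fun t => by rw [← fApp_coe, ← fApp_coe, h]) x

theorem dcomp_eq_map (i c : ℕ) {N : ℕ} (x : G.obj N) :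
    G.dcomp i c x = G.map (dcompOH i c N) x := by
  induction c generalizing i with
  | zero =>
    rw [G.map_congr_val (β := OrderHom.id) (fun t => ?_), G.map_id]
    · rfl
    · simp only [dcompOH_val, OrderHom.id_coe, id_eq]
      split_ifs <;> omega
  | succ c ih =>
    show G.map (δOH (i+1) (N - c - 1) (N - c)) (G.dcomp (i+1) c x) = _
    rw [ih, G.map_comp]
    refine G.map_congr_val (fun t => ?_) x
    simp only [OrderHom.comp_coe, Function.comp_apply, dcompOH_val, δOH_val]
    split_ifs <;> omega

theorem scomp_eq_map (i c : ℕ) {M : ℕ} (x : G.obj M) :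
    G.scomp i c x = G.map (scompOH i c M) x := by
  induction c with
  | zero =>
    rw [G.map_congr_val (β := OrderHom.id) (fun t => ?_), G.map_id]
    · rfl
    · simp only [scompOH_val, OrderHom.id_coe, id_eq]
      omega
  | succ c ih =>
    show G.map (σOH (i+c) (M+c+1) (M+c)) (G.scomp i c x) = _
    rw [ih, G.map_comp]
    refine G.map_congr_val (fun t => ?_) x
    simp only [OrderHom.comp_coe, Function.comp_apply, scompOH_val, σOH_val]
    split_ifs <;> omega

theorem ds_eq_map (i : ℕ) {j N : ℕ} (hj : j ≤ N) (x : G.obj N) :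
    G.ds i j x = G.map (collapseOH i j N) x := by
  rw [ds, G.dcomp_eq_map, G.scomp_eq_map, G.map_comp]
  refine G.gcast_map (by omega) _ _ (fun t => ?_) x
  simp only [fApp, OrderHom.comp_coe, Function.comp_apply, dcompOH_val, scompOH_val,
    collapseOH_val, Nat.min_def]
  split_ifs <;> omega

theorem dsTo_eq_map {i j : ℕ} (n : ℕ) (hij : i ≤ j) (hin : i ≤ n) (x : G.obj j) :
    G.dsTo i n x = G.map (truncOH i n j) x := by
  rw [dsTo, G.dcomp_eq_map, G.gcast_map (by omega) _ (truncOH i i j) (fun t => ?_),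
    G.scomp_eq_map, G.map_comp]
  · refine G.gcast_map (by omega) _ _ (fun t => ?_) x
    simp only [fApp, OrderHom.comp_coe, Function.comp_apply, scompOH_val, truncOH_val]
    omega
  · simp only [fApp, dcompOH_val, truncOH_val]
    split_ifs <;> omega

theorem ds_self {i N : ℕ} (hi : i ≤ N) (x : G.obj N) : G.ds i i x = x := by
  rw [G.ds_eq_map i hi, G.map_congr_val (β := OrderHom.id) (fun t => ?_), G.map_id]
  simp only [collapseOH_val, OrderHom.id_coe, id_eq]
  split_ifs <;> omega

theorem ds_one (i : ℕ) {j N : ℕ} (hj : j ≤ N) : G.ds i j (1 : G.obj N) = 1 := by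
  rw [G.ds_eq_map i hj]
  exact map_one (G.mapHom _)

theorem dsTo_one {i j : ℕ} (n : ℕ) (hij : i ≤ j) (hin : i ≤ n) :
    G.dsTo i n (1 : G.obj j) = 1 := by
  rw [G.dsTo_eq_map n hij hin]
  exact map_one (G.mapHom _)

theorem ds_deg_of_lt {i j k n : ℕ} (hjk : j < k) (hkn : k ≤ n) (z : G.obj n) :
    G.ds i j (G.deg k z) = G.deg k (G.ds i j z) := by
  rw [G.ds_eq_map i (by omega), G.ds_eq_map i (by omega)]
  refine G.map_map_congr_val (fun t => ?_) z
  simp only [σOH_val, collapseOH_val]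
  split_ifs <;> omega

theorem ds_succ_deg {i j k n : ℕ} (hik : i ≤ k) (hkj : k ≤ j) (hjn : j ≤ n) (z : G.obj n) :
    G.ds i (j+1) (G.deg k z) = G.deg k (G.ds i j z) := by
  rw [G.ds_eq_map i (by omega), G.ds_eq_map i hjn]
  refine G.map_map_congr_val (fun t => ?_) z
  simp only [σOH_val, collapseOH_val]
  split_ifs <;> omega

theorem ds_succ_succ_deg {i j k n : ℕ} (hki : k ≤ i) (hjn : j ≤ n) (z : G.obj n) :
    G.ds (i+1) (j+1) (G.deg k z) = G.deg k (G.ds i j z) := by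
  rw [G.ds_eq_map (i+1) (by omega), G.ds_eq_map i hjn]
  refine G.map_map_congr_val (fun t => ?_) z
  simp only [σOH_val, collapseOH_val]
  split_ifs <;> omega

theorem dsTo_succ_eq_deg {i j k n : ℕ} (hik : i ≤ k) (hkn : k ≤ n) (hij : i ≤ j) (z : G.obj j) :
    G.dsTo i (n+1) z = G.deg k (G.dsTo i n z) := by
  rw [G.dsTo_eq_map (n+1) hij (by omega), G.dsTo_eq_map n hij (by omega), deg, G.map_comp]
  refine G.map_congr_val (fun t => ?_) z
  simp only [OrderHom.comp_coe, Function.comp_apply, σOH_val, truncOH_val]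
  split_ifs <;> omega

theorem dsTo_deg {i k m n : ℕ} (hik : i ≤ k) (hkm : k ≤ m) (hkn : k ≤ n) (z : G.obj m) :
    G.dsTo i (n+1) (G.deg k z) = G.deg k (G.dsTo i n z) := by
  rw [G.dsTo_eq_map (n+1) (by omega) (by omega), G.dsTo_eq_map n (by omega) (by omega)]
  refine G.map_map_congr_val (fun t => ?_) z
  simp only [σOH_val, truncOH_val, Nat.min_def]
  split_ifs <;> omega

theorem dsTo_succ_deg {i k m n : ℕ} (hki : k ≤ i) (him : i ≤ m) (hin : i ≤ n) (z : G.obj m) :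
    G.dsTo (i+1) (n+1) (G.deg k z) = G.deg k (G.dsTo i n z) := by
  rw [G.dsTo_eq_map (n+1) (by omega) (by omega), G.dsTo_eq_map n him hin]
  refine G.map_map_congr_val (fun t => ?_) z
  simp only [σOH_val, truncOH_val, Nat.min_def]
  split_ifs <;> omega

theorem yAux_succ_of_le (n : ℕ) (g : ∀ j, G.obj j) {f i : ℕ} (h : n ≤ f + i) :
    G.yAux n g (f+1) i = G.yAux n g f i := by
  induction f generalizing i with
  | zero =>
    show _ * _ = 1
    rw [aProd_of_le _ (by omega), dProd_of_le _ (by omega), one_mul]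
  | succ f ih =>
    show aProd _ (i+1) n * _ = aProd _ (i+1) n * _
    congr 1
    exact aProd_eq_map (MonoidHom.id _) fun j _ _ => by rw [ih (by omega)]; rfl

theorem yAux_self (n : ℕ) (g : ∀ j, G.obj j) (i : ℕ) :
    G.yAux n g n i =
      aProd (fun j => G.ds i j (G.yAux n g n j)⁻¹) (i+1) n *
        dProd (fun j => G.dsTo i n (g j)) i n :=
  (G.yAux_succ_of_le n g (by omega)).symm

theorem yAux_self_of_le {n i : ℕ} (g : ∀ j, G.obj j) (h : n ≤ i) : G.yAux n g n i = 1 := by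
  rw [yAux_self, aProd_of_le _ (by omega), dProd_of_le _ h, one_mul]

theorem aProd_ds_yAux_inv_mul_dProd (n : ℕ) (g : ∀ j, G.obj j) (i : ℕ) :
    aProd (fun j => G.ds i j (G.yAux n g n j)⁻¹) i n * dProd (fun j => G.dsTo i n (g j)) i n =
      1 := by
  rcases lt_or_ge i n with h | h
  · rw [aProd_eq_mul_aProd_succ _ h, G.ds_self h.le, mul_assoc, ← yAux_self, inv_mul_cancel]
  · rw [aProd_of_le _ h, dProd_of_le _ h, one_mul]

/-- `g' = g s_k` for the degeneracy `s_k : W̄_n G → W̄_{n+1} G`, on tuples extended by `1`. -/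
structure IsWbarDeg (k n : ℕ) (g' g : ∀ j, G.obj j) : Prop where
  eq_of_lt : ∀ j < k, g' j = g j
  eq_one : g' k = 1
  succ_eq_deg : ∀ j, k ≤ j → j < n → g' (j+1) = G.deg k (g j)

variable {G}

theorem IsWbarDeg.dProd_dsTo_of_le {k n i : ℕ} {g' g : ∀ j, G.obj j}
    (hg : G.IsWbarDeg k n g' g) (hkn : k ≤ n) (hik : i ≤ k) :
    dProd (fun j => G.dsTo i (n+1) (g' j)) i (n+1) =
      G.deg k (dProd (fun j => G.dsTo i n (g j)) i n) := by
  refine dProd_insert_one_eq_map (G.degHom k n) hik hkn (fun j hij hjk => ?_) ?_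
    (fun j hkj hjn => ?_)
  · rw [degHom_apply, hg.eq_of_lt j hjk, G.dsTo_succ_eq_deg hik hkn hij]
  · rw [hg.eq_one, G.dsTo_one (n+1) hik (by omega)]
  · rw [degHom_apply, hg.succ_eq_deg j hkj hjn, G.dsTo_deg hik hkj hkn]

theorem IsWbarDeg.dProd_dsTo_succ {k n i : ℕ} {g' g : ∀ j, G.obj j}
    (hg : G.IsWbarDeg k n g' g) (hki : k ≤ i) :
    dProd (fun j => G.dsTo (i+1) (n+1) (g' j)) (i+1) (n+1) =
      G.deg k (dProd (fun j => G.dsTo i n (g j)) i n) :=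
  dProd_succ_succ_eq_map (G.degHom k n) fun j hij hjn => by
    rw [degHom_apply, hg.succ_eq_deg j (by omega) hjn, G.dsTo_succ_deg hki hij (by omega)]

variable (G)

/-- The degeneracy `s_k : Diag_n NG → Diag_{n+1} NG`, on tuples extended by `1`. -/
def diagDeg (k : ℕ) {n : ℕ} (y : ℕ → G.obj n) (i : ℕ) : G.obj (n+1) :=
  if i < k then G.deg k (y i) else if i = k then 1 else G.deg k (y (i-1))

theorem diagDeg_of_lt {k n i : ℕ} (y : ℕ → G.obj n) (h : i < k) :
    G.diagDeg k y i = G.deg k (y i) :=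
  if_pos h

theorem diagDeg_self (k : ℕ) {n : ℕ} (y : ℕ → G.obj n) : G.diagDeg k y k = 1 := by
  rw [diagDeg, if_neg (lt_irrefl k), if_pos rfl]

theorem diagDeg_succ {k n i : ℕ} (y : ℕ → G.obj n) (h : k ≤ i) :
    G.diagDeg k y (i+1) = G.deg k (y i) := by
  rw [diagDeg, if_neg (by omega), if_neg (by omega), Nat.add_sub_cancel]

theorem yAux_of_isWbarDeg {k n : ℕ} {g' g : ∀ j, G.obj j} (hkn : k ≤ n)
    (hg : G.IsWbarDeg k n g' g) (i : ℕ) :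
    G.yAux (n+1) g' (n+1) i = G.diagDeg k (G.yAux n g n) i := by
  have ih : ∀ j, i < j → j ≤ n + 1 → G.yAux (n+1) g' (n+1) j = G.diagDeg k (G.yAux n g n) j :=
    fun j _ _ => yAux_of_isWbarDeg hkn hg j
  have inv_succ : ∀ j, i ≤ j → k ≤ j → j < n →
      (G.yAux (n+1) g' (n+1) (j+1))⁻¹ = G.deg k (G.yAux n g n j)⁻¹ := fun j hij hkj hjn => by
    rw [ih (j+1) (by omega) (by omega), G.diagDeg_succ _ hkj, deg_inv]
  rw [yAux_self]
  rcases lt_trichotomy i k with hik | rfl | hki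
  · rw [G.diagDeg_of_lt _ hik, G.yAux_self n g i, deg_mul]
    congr 1
    · refine aProd_insert_one_eq_map (G.degHom k n) hik hkn (fun j hij hjk => ?_) ?_
        (fun j hkj hjn => ?_)
      · rw [degHom_apply, ih j (by omega) (by omega), G.diagDeg_of_lt _ hjk, ← deg_inv,
          G.ds_deg_of_lt hjk hkn]
      · rw [ih k hik (by omega), diagDeg_self, inv_one, G.ds_one i (by omega)]
      · rw [degHom_apply, inv_succ j (by omega) hkj hjn, G.ds_succ_deg hik.le hkj hjn.le]
    · exact hg.dProd_dsTo_of_le hkn hik.le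
  · have hA : aProd (fun j => G.ds i j (G.yAux (n+1) g' (n+1) j)⁻¹) (i+1) (n+1) =
        G.deg i (aProd (fun j => G.ds i j (G.yAux n g n j)⁻¹) i n) :=
      aProd_succ_succ_eq_map (G.degHom i n) fun j hij hjn => by
        rw [degHom_apply, inv_succ j hij hij hjn, G.ds_succ_deg le_rfl hij hjn.le]
    rw [diagDeg_self, hA, hg.dProd_dsTo_of_le hkn le_rfl, ← deg_mul,
      aProd_ds_yAux_inv_mul_dProd, deg_one]
  · obtain ⟨i, rfl⟩ : ∃ i', i = i' + 1 := ⟨i - 1, by omega⟩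
    rw [G.diagDeg_succ _ (by omega), G.yAux_self n g i, deg_mul]
    congr 1
    · exact aProd_succ_succ_eq_map (G.degHom k n) fun j hij hjn => by
        rw [degHom_apply, inv_succ j (by omega) (by omega) hjn,
          G.ds_succ_succ_deg (by omega) hjn.le]
    · exact hg.dProd_dsTo_succ (by omega)
termination_by n + 1 - i

theorem gE_of_lt {n j : ℕ} (g : G.WbarN n) (h : j < n) : G.gE g j = g ⟨j, h⟩ := dif_pos h

theorem xE_val {n : ℕ} (y : Fin n → G.obj n) (i : Fin n) : G.xE y i = y i := dif_pos i.isLt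

theorem gE_wbarMap_σ {k n j : ℕ} (hkn : k ≤ n) (x : G.WbarN n) (hj : j < n + 1) :
    G.gE (G.wbarMap (σOH k (n+1) n) x) j =
      dProd (fun l => G.map (restrictOH (σOH k (n+1) n) j l) (G.gE x l))
        (if j ≤ k then j else j - 1) (if j < k then j + 1 else j) := by
  rw [gE_of_lt _ _ hj, wbarMap, σOH_castSucc_val, σOH_succ_val hkn]

theorem isWbarDeg_wbarMap_σ {k n : ℕ} (hkn : k ≤ n) (x : G.WbarN n) :
    G.IsWbarDeg k n (G.gE (G.wbarMap (σOH k (n+1) n) x)) (G.gE x) where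
  eq_of_lt j hjk := by
    rw [G.gE_wbarMap_σ hkn x (by omega), if_pos hjk.le, if_pos hjk, dProd_single,
      G.map_congr_val (β := OrderHom.id) (fun t => ?_), G.map_id]
    simp only [restrictOH_val, fApp, σOH_val, Nat.min_def, OrderHom.id_coe, id_eq]
    split_ifs <;> omega
  eq_one := by
    rw [G.gE_wbarMap_σ hkn x (by omega), if_pos le_rfl, if_neg (lt_irrefl k),
      dProd_of_le _ le_rfl]
  succ_eq_deg j hkj hjn := by
    rw [G.gE_wbarMap_σ hkn x (by omega), if_neg (by omega), if_neg (by omega),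
      Nat.add_sub_cancel, dProd_single]
    refine G.map_congr_val (fun t => ?_) _
    simp only [restrictOH_val, fApp, σOH_val, Nat.min_def]
    split_ifs <;> omega

theorem xE_diagMap_σ {k n : ℕ} (hkn : k ≤ n) (y : Fin n → G.obj n) :
    G.xE (G.diagMap (σOH k (n+1) n) y) = G.diagDeg k (G.xE y) := by
  funext i
  rcases lt_or_ge i (n+1) with hi | hi
  · rw [xE, dif_pos hi, diagMap, σOH_castSucc_val, σOH_succ_val hkn]
    dsimp only
    rcases lt_trichotomy i k with hik | rfl | hki
    · rw [if_pos hik.le, if_pos hik, dProd_single, diagDeg_of_lt _ _ hik]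
      rfl
    · rw [if_pos le_rfl, if_neg (lt_irrefl i), dProd_of_le _ le_rfl, diagDeg_self]
    · obtain ⟨i, rfl⟩ : ∃ i', i = i' + 1 := ⟨i - 1, by omega⟩
      rw [if_neg (by omega), if_neg (by omega), Nat.add_sub_cancel, dProd_single,
        diagDeg_succ _ _ (by omega)]
      rfl
  · rw [xE, dif_neg (by omega), diagDeg, if_neg (by omega), if_neg (by omega), xE,
      dif_neg (by omega), deg_one]

theorem xE_SGn (n : ℕ) (x : G.WbarN n) : G.xE (G.SGn n x) = G.yAux n (G.gE x) n := by
  funext i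
  by_cases h : i < n
  · exact dif_pos h
  · rw [xE, dif_neg h, yAux_self_of_le _ _ (not_lt.mp h)]

end SGrp

end Paper

open Paper Paper.SGrp in
/-- the maps `(S_G)_n : W̄_n G → Diag_n NG` commute with all degeneracy maps. -/
theorem stmt_9 (G : SGrp) (n : ℕ) (k : ℕ) (hk : k ≤ n) (x : G.WbarN n) :
    G.SGn (n+1) (G.wbarMap (σOH k (n+1) n) x) = G.diagMap (σOH k (n+1) n) (G.SGn n x) := by
  funext i
  have h := congrFun (G.xE_diagMap_σ hk (G.SGn n x)) i
  rw [xE_val, xE_SGn] at h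
  rw [h]
  exact G.yAux_of_isWbarDeg hk (G.isWbarDeg_wbarMap_σ hk x) i
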